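/- arXiv:math/0607353 — 2 statements merged into one kernel-verified Lean document; each statement's English description precedes it below -/
import Mathlib

section
/- Let X be a uniform space and E a symmetric entourage such that every E-ball is chain connected as a uniform subspace, i.e. for every entourage F of X and every x ∈ X, any two points of B(x,E) are joined by an F-chain all of whose points lie in B(x,E). Then for every entourage F ⊆ E, every E-chain in X is E-homotopic (with endpoints fixed) to an F-chain with the same endpoints; in particular every E-loop at a point ∗ is E-homotopic to an F-loop at ∗. -/
open UniformSpace

universe u

/-- `l` is a (nonempty) `E`-chain, i.e. a finite sequence of points of `X` with all
consecutive pairs in `E`. -/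
def IsChainList {X : Type u} (E : Set (X × X)) (l : List X) : Prop :=
  l ≠ [] ∧ l.Chain' (fun a b => (a, b) ∈ E)

/-- `l'` is an (elementary) `E`-extension of `l`: it is obtained from `l` by inserting one
point, leaving the endpoints fixed, and both `l` and `l'` are `E`-chains. -/
def ChainExt {X : Type u} (E : Set (X × X)) (l l' : List X) : Prop :=
  (∃ (s t : List X) (x : X), l = s ++ t ∧ l' = s ++ x :: t) ∧
    l.head? = l'.head? ∧ l.getLast? = l'.getLast? ∧
    l.Chain' (fun a b => (a, b) ∈ E) ∧ l'.Chain' (fun a b => (a, b) ∈ E)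

/-- Two `E`-chains are `E`-homotopic if they are related by the equivalence relation
generated by one-point `E`-extensions. -/
def ChainHomotopic {X : Type u} (E : Set (X × X)) : List X → List X → Prop :=
  Relation.EqvGen (ChainExt E)

/-!
Induct on the chain `a :: b :: γ`: first refine the tail `b :: γ` to an `F`-chain `b :: r`,
then replace the link `(a, b)` by an `F`-chain `a, w₁, …, wₙ, b` inside `B(a, E)`, which
exists because that ball is chain connected. Every `wᵢ` is `E`-close to `a`, so inserting
`wₙ, …, w₁` one at a time right after `a` is a sequence of `E`-extensions.
-/

variable {X : Type u} {E : Set (X × X)} {l l' : List X}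

namespace ChainHomotopic

theorem apply_eq {α : Sort*} {f : List X → α} (hf : ∀ l l', ChainExt E l l' → f l = f l')
    (h : ChainHomotopic E l l') : f l = f l' := by
  induction h with
  | rel _ _ h => exact hf _ _ h
  | refl => rfl
  | symm _ _ _ ih => exact ih.symm
  | trans _ _ _ _ _ ih₁ ih₂ => exact ih₁.trans ih₂

theorem head?_eq (h : ChainHomotopic E l l') : l.head? = l'.head? :=
  h.apply_eq fun _ _ h => h.2.1

theorem getLast?_eq (h : ChainHomotopic E l l') : l.getLast? = l'.getLast? :=
  h.apply_eq fun _ _ h => h.2.2.1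

end ChainHomotopic

theorem ChainExt.cons {a b : X} (hab : (a, b) ∈ E) (h : ChainExt E l l')
    (hl : l.head? = some b) : ChainExt E (a :: l) (a :: l') := by
  obtain ⟨⟨s, t, x, rfl, rfl⟩, hhead, hlast, hc, hc'⟩ := h
  refine ⟨⟨a :: s, t, x, rfl, rfl⟩, rfl, ?_, ?_, ?_⟩
  · simp only [List.getLast?_cons, hlast]
  · exact List.IsChain.cons hc (by simpa [hl] using hab)
  · exact List.IsChain.cons hc' (by simpa [← hhead, hl] using hab)

theorem ChainHomotopic.cons {a b : X} (hab : (a, b) ∈ E) (h : ChainHomotopic E l l')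
    (hl : l.head? = some b) : ChainHomotopic E (a :: l) (a :: l') := by
  induction h with
  | rel _ _ h => exact .rel _ _ (h.cons hab hl)
  | refl => exact .refl _
  | symm _ _ h ih => exact .symm _ _ (ih ((ChainHomotopic.head?_eq h).trans hl))
  | trans _ _ _ h₁ _ ih₁ ih₂ =>
    exact .trans _ _ _ (ih₁ hl) (ih₂ ((ChainHomotopic.head?_eq h₁).symm.trans hl))

theorem chainExt_cons_cons {a x : X} (hl : l ≠ [])
    (hal : (a :: l).IsChain (fun p q => (p, q) ∈ E)) (hax : (a, x) ∈ E)
    (hxl : (x :: l).IsChain (fun p q => (p, q) ∈ E)) : ChainExt E (a :: l) (a :: x :: l) := by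
  refine ⟨⟨[a], l, x, rfl, rfl⟩, rfl, ?_, hal, hxl.cons (by simpa using hax)⟩
  simp [List.getLast?_cons, List.getLast?_eq_getLast hl]

theorem chainHomotopic_insert_after_head {a : X} {w : List X} (hl : l ≠ [])
    (hal : (a :: l).IsChain (fun p q => (p, q) ∈ E)) (hw : ∀ p ∈ w, p ∈ ball a E)
    (hwl : (w ++ l).IsChain (fun p q => (p, q) ∈ E)) :
    ChainHomotopic E (a :: l) (a :: (w ++ l)) := by
  induction w with
  | nil => exact .refl _
  | cons x w ih =>
    have hwl' : (w ++ l).IsChain (fun p q => (p, q) ∈ E) := hwl.tail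
    have hawl : (a :: (w ++ l)).IsChain (fun p q => (p, q) ∈ E) := by
      refine hwl'.cons fun y hy => ?_
      rcases w with _ | ⟨z, w⟩
      · exact List.isChain_cons.mp hal |>.1 y hy
      · obtain rfl : y = z := by simpa using hy.symm
        exact hw y (by simp)
    exact .trans _ _ _ (ih (fun p hp => hw p (.tail _ hp)) hwl')
      (.rel _ _ (chainExt_cons_cons (by simp [hl]) hawl (hw x (.head _)) hwl))

theorem exists_finer_chain_chainHomotopic {F : Set (X × X)} (hFrefl : ∀ a, (a, a) ∈ F)
    (hFE : F ⊆ E)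
    (hrefine : ∀ a b, (a, b) ∈ E → ∃ m : List X, IsChainList F m ∧ m.head? = some a ∧
      m.getLast? = some b ∧ ∀ p ∈ m, p ∈ ball a E) :
    ∀ γ : List X, γ.IsChain (fun p q => (p, q) ∈ E) →
      ∃ γ', γ'.IsChain (fun p q => (p, q) ∈ F) ∧ ChainHomotopic E γ γ'
  | [], _ => ⟨[], .nil, .refl _⟩
  | [a], _ => ⟨[a], .singleton a, .refl _⟩
  | a :: b :: γ, hγ => by
    have hab : (a, b) ∈ E := (List.isChain_cons_cons.mp hγ).1
    obtain ⟨δ, hδ, hγδ⟩ :=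
      exists_finer_chain_chainHomotopic hFrefl hFE hrefine (b :: γ) hγ.tail
    obtain ⟨r, rfl⟩ : ∃ r, δ = b :: r := by
      have := hγδ.head?_eq
      rcases δ with _ | ⟨c, r⟩ <;> simp_all
    obtain ⟨m, ⟨-, hm⟩, hma, hmb, hmball⟩ := hrefine a b hab
    have hm_split : m.dropLast ++ [b] = m := List.dropLast_append_getLast? b hmb
    -- `m` itself starts at `a`, so the new chain repeats `a`; reflexivity of `F` covers that link.
    have ham : (a :: m).IsChain (fun p q => (p, q) ∈ F) :=
      hm.cons (by simpa [hma] using hFrefl a)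
    have hF : (a :: (m.dropLast ++ b :: r)).IsChain (fun p q => (p, q) ∈ F) := by
      simpa using (List.IsChain.append_overlap (l₁ := a :: m.dropLast)
        (by simpa [hm_split] using ham) hδ (List.cons_ne_nil b []))
    refine ⟨_, hF, .trans _ _ _ (hγδ.cons hab rfl) (chainHomotopic_insert_after_head
      (List.cons_ne_nil b r) ?_ (fun p hp => hmball p (List.mem_of_mem_dropLast hp))
      (hF.tail.imp fun _ _ h => hFE h))⟩
    exact (hδ.imp fun _ _ h => hFE h).cons (by simpa using hab)

theorem chainHomotopic_to_finer_chain_general {X : Type u} [UniformSpace X]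
    (E : Set (X × X)) (hE : E ∈ uniformity X)
    (hballcc : ∀ F ∈ uniformity X, SetRel.IsSymm F → ∀ x : X, ∀ y ∈ ball x E, ∀ z ∈ ball x E,
      ∃ l : List X, IsChainList F l ∧ l.head? = some y ∧ l.getLast? = some z ∧
        ∀ p ∈ l, p ∈ ball x E) :
    ∀ F ∈ uniformity X, SetRel.IsSymm F → F ⊆ E →
      (∀ γ : List X, IsChainList E γ →
        ∃ γ' : List X, IsChainList F γ' ∧ ChainHomotopic E γ γ' ∧
          γ'.head? = γ.head? ∧ γ'.getLast? = γ.getLast?) ∧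
      (∀ (x₀ : X) (γ : List X), IsChainList E γ → γ.head? = some x₀ → γ.getLast? = some x₀ →
        ∃ γ' : List X, IsChainList F γ' ∧ ChainHomotopic E γ γ' ∧
          γ'.head? = some x₀ ∧ γ'.getLast? = some x₀) := by
  intro F hF hFsym hFE
  have refine_chain (γ : List X) (hγ : IsChainList E γ) :
      ∃ γ', IsChainList F γ' ∧ ChainHomotopic E γ γ' := by
    obtain ⟨γ', hγ'F, hγγ'⟩ := exists_finer_chain_chainHomotopic
      (fun _ => refl_mem_uniformity hF) hFE
      (fun a b hab => hballcc F hF hFsym a a (mem_ball_self a hE) b hab) γ hγ.2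
    refine ⟨γ', ⟨?_, hγ'F⟩, hγγ'⟩
    rintro rfl
    simpa [List.head?_eq_none_iff, hγ.1] using hγγ'.head?_eq
  refine ⟨fun γ hγ => ?_, fun x₀ γ hγ h₀ h₁ => ?_⟩
  · obtain ⟨γ', hγ', h⟩ := refine_chain γ hγ
    exact ⟨γ', hγ', h, h.head?_eq.symm, h.getLast?_eq.symm⟩
  · obtain ⟨γ', hγ', h⟩ := refine_chain γ hγ
    exact ⟨γ', hγ', h, h.head?_eq.symm.trans h₀, h.getLast?_eq.symm.trans h₁⟩

/-- (Statement 14) Let `X` be a uniform space and `E` a symmetric entourage such that every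
`E`-ball is chain connected as a uniform subspace: for every entourage `F` and every `x`,
any two points of `B(x,E)` are joined by an `F`-chain all of whose points lie in `B(x,E)`.
Then for every entourage `F ⊆ E`, every `E`-chain in `X` is `E`-homotopic (with the same
endpoints) to an `F`-chain; in particular every `E`-loop at a point `∗` is `E`-homotopic to
an `F`-loop at `∗`. -/
theorem chainHomotopic_to_finer_chain {X : Type u} [UniformSpace X]
    (E : Set (X × X)) (hE : E ∈ uniformity X) (hEsym : SetRel.IsSymm E)
    (hballcc : ∀ F ∈ uniformity X, SetRel.IsSymm F → ∀ x : X, ∀ y ∈ ball x E, ∀ z ∈ ball x E,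
      ∃ l : List X, IsChainList F l ∧ l.head? = some y ∧ l.getLast? = some z ∧
        ∀ p ∈ l, p ∈ ball x E) :
    ∀ F ∈ uniformity X, SetRel.IsSymm F → F ⊆ E →
      (∀ γ : List X, IsChainList E γ →
        ∃ γ' : List X, IsChainList F γ' ∧ ChainHomotopic E γ γ' ∧
          γ'.head? = γ.head? ∧ γ'.getLast? = γ.getLast?) ∧
      (∀ (x₀ : X) (γ : List X), IsChainList E γ → γ.head? = some x₀ → γ.getLast? = some x₀ →
        ∃ γ' : List X, IsChainList F γ' ∧ ChainHomotopic E γ γ' ∧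
          γ'.head? = some x₀ ∧ γ'.getLast? = some x₀) :=
  chainHomotopic_to_finer_chain_general E hE hballcc
end

section
/- Let X be a connected, simply connected (every loop in X is null-homotopic), uniformly locally pathwise connected uniform space. Then for every symmetric entourage E of X whose E-balls are all open and path connected, every E-loop in X is E-homotopic to the trivial one-point chain at its basepoint. -/
open UniformSpace

universe u

/-- Symmetric relation (the former Mathlib `SymmetricRel`, removed since). -/
def SymmetricRel {α : Type*} (V : Set (α × α)) : Prop :=
  Prod.swap ⁻¹' V = V

/-!
Join consecutive points of the `E`-loop by paths inside the `E`-balls; this gives a loop `c` at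
`p`. The chain of values of `c` at `m + 1` equally spaced times is `E`-homotopic to the given
loop, since each ball path collapses onto its two endpoints (all its points are `E`-close to the
centre of the ball). A null-homotopy of `c` is uniformly continuous, so for `m` large its values
on the `(m + 1) × (m + 1)` grid form rows of `E`-chains in which neighbouring points, diagonals
included, are `E`-close; consecutive rows are then `E`-homotopic by trading one point at a time,
and the last row is constant.
-/

open Filter Uniformity
open scoped SetRel

theorem List.IsChain.append_of_getLast? {α : Type*} {R : α → α → Prop} {k r : List α} {b : α}
    (hk : k.IsChain R) (hlast : k.getLast? = some b) (hr : (b :: r).IsChain R) :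
    (k ++ r).IsChain R :=
  hk.append hr.tail fun x hx _ hy => by
    obtain rfl : b = x := by simpa [hlast] using hx
    exact hr.rel_head? hy

theorem List.map_range_succ_eq_cons {α : Type*} (f : ℕ → α) (n : ℕ) :
    (List.range (n + 1)).map f = f 0 :: (List.range n).map (fun k => f (k + 1)) := by
  simp [List.range_succ_eq_map, Function.comp_def]

theorem List.isChain_map_range_succ {α : Type*} {R : α → α → Prop} {f : ℕ → α} {n : ℕ} :
    ((List.range (n + 1)).map f).IsChain R ↔ ∀ k < n, R (f k) (f (k + 1)) := by
  rw [List.isChain_map, List.isChain_range_succ]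

section Combinatorics

variable {X : Type*} {E : Set (X × X)} {l l' l₁ l₂ l₃ : List X}

theorem ChainExt.chainHomotopic (h : ChainExt E l₁ l₂) : ChainHomotopic E l₁ l₂ :=
  Relation.EqvGen.rel _ _ h

namespace ChainHomotopic

protected theorem refl (l : List X) : ChainHomotopic E l l := Relation.EqvGen.refl l

protected theorem symm (h : ChainHomotopic E l₁ l₂) : ChainHomotopic E l₂ l₁ :=
  Relation.EqvGen.symm _ _ h

protected theorem trans (h₁ : ChainHomotopic E l₁ l₂) (h₂ : ChainHomotopic E l₂ l₃) :
    ChainHomotopic E l₁ l₃ :=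
  Relation.EqvGen.trans _ _ _ h₁ h₂

instance : Trans (ChainHomotopic E) (ChainHomotopic E) (ChainHomotopic E) := ⟨.trans⟩

theorem iff_of_chainExt {P : List X → Prop} (hP : ∀ l l', ChainExt E l l' → (P l ↔ P l'))
    (h : ChainHomotopic E l l') : P l ↔ P l' := by
  induction h with
  | rel _ _ h => exact hP _ _ h
  | refl => rfl
  | symm _ _ _ ih => exact ih.symm
  | trans _ _ _ _ _ ih₁ ih₂ => exact ih₁.trans ih₂

theorem isChain_iff (h : ChainHomotopic E l l') :
    l.IsChain (· ~[E] ·) ↔ l'.IsChain (· ~[E] ·) :=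
  iff_of_chainExt (fun _ _ e => iff_of_true e.2.2.2.1 e.2.2.2.2) h

theorem map_of_chainExt {P : List X → Prop} {φ : List X → List X}
    (hP : ∀ l l', ChainExt E l l' → (P l ↔ P l'))
    (hφ : ∀ l l', P l → ChainExt E l l' → ChainExt E (φ l) (φ l'))
    (h : ChainHomotopic E l l') (hl : P l) : ChainHomotopic E (φ l) (φ l') := by
  induction h with
  | rel _ _ h => exact (hφ _ _ hl h).chainHomotopic
  | refl => exact .refl _
  | symm _ _ h ih => exact (ih ((iff_of_chainExt hP h).2 hl)).symm
  | trans _ _ _ h _ ih₁ ih₂ => exact (ih₁ hl).trans (ih₂ ((iff_of_chainExt hP h).1 hl))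

theorem append_right {b : X} {r : List X} (h : ChainHomotopic E l l') (hl : l.getLast? = some b)
    (hr : (b :: r).IsChain (· ~[E] ·)) : ChainHomotopic E (l ++ r) (l' ++ r) := by
  refine h.map_of_chainExt (P := (·.getLast? = some b)) (φ := (· ++ r))
    (fun _ _ e => by rw [e.2.2.1]) (fun k k' hk e => ?_) hl
  obtain ⟨⟨s, t, x, hk_eq, hk'_eq⟩, hhead, hlast, hc, hc'⟩ := e
  refine ⟨⟨s, t ++ r, x, by simp [hk_eq], by simp [hk'_eq]⟩, ?_, ?_, hc.append_of_getLast? hk hr,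
    hc'.append_of_getLast? (hlast ▸ hk) hr⟩
  · rw [List.head?_append, List.head?_append, hhead]
  · rw [List.getLast?_append, List.getLast?_append, hlast]

theorem append_left {a : X} {s : List X} (h : ChainHomotopic E l l') (hl : l.head? = some a)
    (hs : (s ++ [a]).IsChain (· ~[E] ·)) : ChainHomotopic E (s ++ l) (s ++ l') := by
  refine h.map_of_chainExt (P := (·.head? = some a)) (φ := (s ++ ·))
    (fun _ _ e => by rw [e.2.1]) (fun k k' hk e => ?_) hl
  obtain ⟨⟨u, t, x, hk_eq, hk'_eq⟩, hhead, hlast, hc, hc'⟩ := e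
  have prepend : ∀ k : List X, k.head? = some a → k.IsChain (· ~[E] ·) →
      (s ++ k).IsChain (· ~[E] ·) := fun k hk hc => by
    obtain ⟨k, rfl⟩ : ∃ k₀, k = a :: k₀ := ⟨k.tail, (List.cons_head?_tail hk).symm⟩
    exact List.isChain_split.2 ⟨hs, hc⟩
  refine ⟨⟨s ++ u, t, x, by simp [hk_eq], by simp [hk'_eq]⟩, ?_, ?_, prepend _ hk hc,
    prepend _ (hhead ▸ hk) hc'⟩
  · rw [List.head?_append, List.head?_append, hhead]
  · rw [List.getLast?_append, List.getLast?_append, hlast]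

end ChainHomotopic

theorem chainHomotopic_replace_second {a u v : X} {t : List X}
    (h : (a :: u :: t).IsChain (· ~[E] ·)) (hav : a ~[E] v) (hvu : v ~[E] u)
    (hvt : (v :: t).IsChain (· ~[E] ·)) (ht : t ≠ []) :
    ChainHomotopic E (a :: u :: t) (a :: v :: t) := by
  obtain ⟨y, t, rfl⟩ := List.exists_cons_of_ne_nil ht
  have detour : (a :: v :: u :: y :: t).IsChain (· ~[E] ·) :=
    .cons_cons hav (.cons_cons hvu h.tail)
  have insert_v : ChainExt E (a :: u :: y :: t) (a :: v :: u :: y :: t) :=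
    ⟨⟨[a], u :: y :: t, v, rfl, rfl⟩, rfl, by simp, h, detour⟩
  have insert_u : ChainExt E (a :: v :: y :: t) (a :: v :: u :: y :: t) :=
    ⟨⟨[a, v], y :: t, u, rfl, rfl⟩, rfl, by simp, .cons_cons hav hvt, detour⟩
  exact insert_v.chainHomotopic.trans insert_u.chainHomotopic.symm

theorem chainHomotopic_pair_of_forall_mem_ball {a b : X} :
    ∀ {l : List X}, l ≠ [] → (a :: l).IsChain (· ~[E] ·) → (∀ y ∈ l, y ∈ ball a E) →
      (a :: l).getLast? = some b → ChainHomotopic E (a :: l) [a, b]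
  | [y], _, _, _, hlast => by
    obtain rfl : y = b := by simpa using hlast
    exact .refl _
  | y :: z :: l, _, hc, hball, hlast => by
    have hc' : (a :: z :: l).IsChain (· ~[E] ·) := .cons_cons (hball z (by simp)) hc.tail.tail
    have drop_y : ChainExt E (a :: z :: l) (a :: y :: z :: l) :=
      ⟨⟨[a], z :: l, y, rfl, rfl⟩, rfl, by simp, hc', hc⟩
    exact drop_y.chainHomotopic.symm.trans <| chainHomotopic_pair_of_forall_mem_ball (by simp) hc'
      (fun w hw => hball w (List.mem_cons_of_mem _ hw)) (by simpa using hlast)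

theorem chainHomotopic_replicate_singleton {a : X} (ha : a ~[E] a) :
    ∀ m : ℕ, ChainHomotopic E (List.replicate (m + 1) a) [a]
  | 0 => .refl _
  | m + 1 => by
    have insert_a : ChainExt E (List.replicate (m + 1) a) (List.replicate (m + 2) a) :=
      ⟨⟨[], List.replicate (m + 1) a, a, rfl, rfl⟩, rfl, by simp [List.getLast?_replicate],
        List.isChain_replicate_of_rel _ ha, List.isChain_replicate_of_rel _ ha⟩
    exact insert_a.chainHomotopic.symm.trans (chainHomotopic_replicate_singleton ha m)

/-- The points of `f` are traded for those of `g` one at a time, from left to right: `f 1` is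
replaced by `g 1` (through the detour `f 0, g 1, f 1, f 2`), and the rest is the same ladder,
one step shorter. -/
theorem chainHomotopic_map_range_of_ladder :
    ∀ {m : ℕ} {f g : ℕ → X}, (∀ k < m, f k ~[E] f (k + 1)) → (∀ k < m, g k ~[E] g (k + 1)) →
      (∀ k < m, g (k + 1) ~[E] f (k + 1)) → (∀ k < m, g k ~[E] f (k + 1)) →
      f 0 = g 0 → f m = g m →
      ChainHomotopic E ((List.range (m + 1)).map f) ((List.range (m + 1)).map g)
  | 0, f, g, _, _, _, _, h0, _ => by simpa [h0] using ChainHomotopic.refl _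
  | 1, f, g, _, _, _, _, h0, h1 => by simpa [List.range_succ, h0, h1] using ChainHomotopic.refl _
  | m + 2, f, g, hf, hg, hrung, hdiag, h0, hm => by
    let f' : ℕ → X := fun | 0 => g 1 | k + 1 => f (k + 2)
    have hf' : ∀ k < m + 1, f' k ~[E] f' (k + 1)
      | 0, _ => hdiag 1 (by omega)
      | k + 1, _ => hf (k + 2) (by omega)
    have hf_list : (List.range (m + 3)).map f =
        f 0 :: f 1 :: (List.range (m + 1)).map (fun k => f (k + 2)) := by
      simp only [List.map_range_succ_eq_cons]
    have hf'_list : (List.range (m + 2)).map f' =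
        g 1 :: (List.range (m + 1)).map (fun k => f (k + 2)) :=
      List.map_range_succ_eq_cons f' (m + 1)
    have trade_first :
        ChainHomotopic E ((List.range (m + 3)).map f) (f 0 :: (List.range (m + 2)).map f') := by
      have hf_chain := (List.isChain_map_range_succ (R := (· ~[E] ·))).2 hf
      have hf'_chain := (List.isChain_map_range_succ (R := (· ~[E] ·))).2 hf'
      rw [hf_list] at hf_chain ⊢
      rw [hf'_list] at hf'_chain ⊢
      exact chainHomotopic_replace_second hf_chain (h0 ▸ hg 0 (by omega)) (hrung 0 (by omega))
        hf'_chain (by simp)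
    have trade_rest : ChainHomotopic E ((List.range (m + 2)).map f')
        ((List.range (m + 2)).map (g <| · + 1)) :=
      chainHomotopic_map_range_of_ladder hf' (fun k _ => hg (k + 1) (by omega))
        (fun k _ => hrung (k + 1) (by omega)) (fun k _ => hdiag (k + 1) (by omega)) rfl hm
    rw [List.map_range_succ_eq_cons g, ← h0]
    exact trade_first.trans <| trade_rest.append_left (s := [f 0]) (by rw [hf'_list]; rfl)
      (List.isChain_pair.2 (h0 ▸ hg 0 (by omega)))

theorem chainHomotopic_map_range_of_grid {G : ℕ → ℕ → X} {m : ℕ}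
    (hG : ∀ j k j' k', j ≤ j' + 1 → j' ≤ j + 1 → k ≤ k' + 1 → k' ≤ k + 1 → G j k ~[E] G j' k')
    (hleft : ∀ j, G j 0 = G 0 0) (hright : ∀ j, G j m = G 0 m) :
    ∀ n, ChainHomotopic E ((List.range (m + 1)).map (G 0)) ((List.range (m + 1)).map (G n))
  | 0 => .refl _
  | n + 1 => (chainHomotopic_map_range_of_grid hG hleft hright n).trans <|
      chainHomotopic_map_range_of_ladder
        (fun _ _ => hG _ _ _ _ (by omega) (by omega) (by omega) (by omega))
        (fun _ _ => hG _ _ _ _ (by omega) (by omega) (by omega) (by omega))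
        (fun _ _ => hG _ _ _ _ (by omega) (by omega) (by omega) (by omega))
        (fun _ _ => hG _ _ _ _ (by omega) (by omega) (by omega) (by omega))
        ((hleft n).trans (hleft (n + 1)).symm) ((hright n).trans (hright (n + 1)).symm)

end Combinatorics

theorem UniformContinuous.eventually_forall_dist_le_mem {α X : Type*} [PseudoMetricSpace α]
    [UniformSpace X] {g : α → X} (hg : UniformContinuous g) {E : Set (X × X)} (hE : E ∈ 𝓤 X) :
    ∀ᶠ m : ℕ in atTop, ∀ s t, dist s t ≤ 1 / (m : ℝ) → g s ~[E] g t := by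
  obtain ⟨ε, hε, hεE⟩ := Metric.mem_uniformity_dist.1 (hg hE)
  filter_upwards [(tendsto_one_div_atTop_nhds_zero_nat (𝕜 := ℝ)).eventually (gt_mem_nhds hε)]
    with m hm s t hst
  exact hεE (hst.trans_lt hm)

theorem dist_natCast_div_le {j j' : ℕ} (m : ℕ) (h₁ : j ≤ j' + 1) (h₂ : j' ≤ j + 1) :
    dist ((j : ℝ) / m) ((j' : ℝ) / m) ≤ 1 / m := by
  have h₁' : (j : ℝ) ≤ j' + 1 := by exact_mod_cast h₁
  have h₂' : (j' : ℝ) ≤ j + 1 := by exact_mod_cast h₂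
  rw [Real.dist_eq, ← sub_div, abs_div, Nat.abs_cast]
  gcongr
  exact abs_sub_le_iff.2 ⟨by linarith, by linarith⟩

namespace Path

variable {X : Type*} [UniformSpace X] {a b c : X}

noncomputable def sample (γ : Path a b) (m : ℕ) : List X :=
  (List.range (m + 1)).map fun k : ℕ => γ.extend ((k : ℝ) / m)

theorem sample_eq_cons (γ : Path a b) (m : ℕ) :
    γ.sample m = a :: (List.range m).map fun k : ℕ => γ.extend (((k : ℝ) + 1) / m) := by
  simp [sample, List.map_range_succ_eq_cons]

theorem getLast?_sample (γ : Path a b) {m : ℕ} (hm : m ≠ 0) : (γ.sample m).getLast? = some b := by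
  simp [sample, List.getLast?_range, hm]

theorem sample_refl (m : ℕ) : (Path.refl a).sample m = List.replicate (m + 1) a := by
  simp [sample, Path.refl_extend, List.map_const']

theorem sample_trans (γ : Path a b) (δ : Path b c) (m : ℕ) :
    (γ.trans δ).sample (2 * m) = γ.sample m ++ (δ.sample m).tail := by
  rcases eq_or_ne m 0 with rfl | hm
  · simp [sample]
  rw [sample, show 2 * m + 1 = (m + 1) + m by ring, List.range_add, List.map_append,
    sample_eq_cons δ, List.tail_cons, sample, List.map_map]
  congr 1 <;> refine List.map_congr_left fun k hk => ?_
  · have hk : (k : ℝ) ≤ m := by exact_mod_cast Nat.lt_succ_iff.1 (List.mem_range.1 hk)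
    rw [extend_trans_of_le_half _ _ (by rw [div_le_iff₀ (by positivity)]; push_cast; linarith)]
    congr 1
    field_simp
    push_cast
    ring
  · rw [Function.comp_apply,
      extend_trans_of_half_le _ _ (by rw [le_div_iff₀ (by positivity)]; push_cast; linarith)]
    congr 1
    field_simp
    push_cast
    ring

theorem eventually_isChain_sample (γ : Path a b) {E : Set (X × X)} (hE : E ∈ 𝓤 X) :
    ∀ᶠ m in atTop, (γ.sample m).IsChain (· ~[E] ·) :=
  γ.uniformContinuous_extend.eventually_forall_dist_le_mem hE |>.mono fun m hm =>
    List.isChain_map_range_succ.2 fun _ _ => hm _ _ (dist_natCast_div_le m (by omega) (by omega))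

theorem Homotopy.eventually_chainHomotopic_sample {γ₀ γ₁ : Path a b} (F : γ₀.Homotopy γ₁)
    {E : Set (X × X)} (hE : E ∈ 𝓤 X) :
    ∀ᶠ m in atTop, ChainHomotopic E (γ₀.sample m) (γ₁.sample m) := by
  let proj := Set.projIcc (0 : ℝ) 1 zero_le_one
  let P : ℝ × ℝ → X := fun st => F (proj st.1, proj st.2)
  have hP : UniformContinuous P :=
    (CompactSpace.uniformContinuous_of_continuous F.continuous).comp
      ((LipschitzWith.projIcc zero_le_one).uniformContinuous.prodMap
        (LipschitzWith.projIcc zero_le_one).uniformContinuous)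
  filter_upwards [hP.eventually_forall_dist_le_mem hE, eventually_ne_atTop 0] with m hm hm0
  have grid := chainHomotopic_map_range_of_grid (E := E) (m := m)
    (G := fun j k => P (j / m, k / m))
    (fun j k j' k' h₁ h₂ h₃ h₄ => hm _ _ <| by
      rw [Prod.dist_eq]
      exact max_le (dist_natCast_div_le m h₁ h₂) (dist_natCast_div_le m h₃ h₄))
    (fun j => by simp [P, proj]) (fun j => by simp [P, proj, hm0]) m
  simp only [sample]
  convert grid using 2 <;> funext k <;> simp [P, proj, hm0, Path.extend, Set.IccExtend]

end Path

/-- Only "frequently": `q.trans γ` runs through `q` and `γ` at double speed, so its sample with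
`2 * m` steps is made of the samples of `q` and `γ` with `m` steps. -/
theorem exists_path_frequently_chainHomotopic_sample {X : Type*} [UniformSpace X]
    {E : Set (X × X)} (hE : E ∈ 𝓤 X) (hball : ∀ x, IsPathConnected (ball x E)) :
    ∀ {a b : X} (l : List X), (a :: l).IsChain (· ~[E] ·) → (a :: l).getLast? = some b →
      ∃ γ : Path a b, ∃ᶠ m in atTop, ChainHomotopic E (a :: l) (γ.sample m)
  | a, b, [], _, hlast => by
    obtain rfl : a = b := by simpa using hlast
    refine ⟨Path.refl a, .of_forall fun m => ?_⟩
    rw [Path.sample_refl]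
    exact (chainHomotopic_replicate_singleton (refl_mem_uniformity hE) m).symm
  | a, b, c :: l, hchain, hlast => by
    obtain ⟨γ, hγ⟩ := exists_path_frequently_chainHomotopic_sample hE hball l hchain.tail
      (by simpa using hlast)
    obtain ⟨q, hq⟩ : JoinedIn (ball a E) a c :=
      (hball a).joinedIn a (refl_mem_uniformity hE) c hchain.rel
    have first_step : ∀ᶠ m in atTop, ChainHomotopic E [a, c] (q.sample m) := by
      filter_upwards [q.eventually_isChain_sample hE, eventually_ne_atTop 0] with m hm hm0
      have hlast := q.getLast?_sample hm0
      rw [Path.sample_eq_cons] at hm hlast ⊢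
      refine (chainHomotopic_pair_of_forall_mem_ball (by simpa using hm0) hm ?_ hlast).symm
      simp only [List.mem_map]
      rintro _ ⟨k, -, rfl⟩
      exact hq _
    refine ⟨q.trans γ, (tendsto_id.const_mul_atTop' two_pos).frequently <|
      (hγ.and_eventually first_step).mono fun m ⟨hrest, hfirst⟩ => ?_⟩
    obtain ⟨T, hT⟩ : ∃ T, γ.sample m = c :: T := ⟨_, γ.sample_eq_cons m⟩
    have hT_chain : (c :: T).IsChain (· ~[E] ·) := hT ▸ hrest.isChain_iff.1 hchain.tail
    calc a :: c :: l = [a] ++ c :: l := rfl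
      ChainHomotopic E _ ([a] ++ γ.sample m) :=
        hrest.append_left rfl (List.isChain_pair.2 hchain.rel)
      _ = [a, c] ++ T := by rw [hT]; rfl
      ChainHomotopic E _ (q.sample m ++ T) := hfirst.append_right rfl hT_chain
      _ = (q.trans γ).sample (2 * m) := by rw [Path.sample_trans, hT, List.tail_cons]

theorem eLoop_nullHomotopic_of_simplyConnected_general {X : Type u} [UniformSpace X]
    (hsc : ∀ (x : X) (c : Path x x), c.Homotopic (Path.refl x)) :
    ∀ E ∈ uniformity X, SymmetricRel E →
      (∀ x : X, IsOpen (ball x E) ∧ IsPathConnected (ball x E)) →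
      ∀ (γ : List X) (p : X), IsChainList E γ → γ.head? = some p → γ.getLast? = some p →
        ChainHomotopic E γ [p] := by
  intro E hE _ hballs γ p hγ hhead hlast
  obtain ⟨l, rfl⟩ : ∃ l, γ = p :: l := ⟨γ.tail, (List.cons_head?_tail hhead).symm⟩
  obtain ⟨c, hc⟩ := exists_path_frequently_chainHomotopic_sample hE (fun x => (hballs x).2) l
    hγ.2 hlast
  obtain ⟨F⟩ := hsc p c
  obtain ⟨m, hcm, hFm⟩ := (hc.and_eventually (F.eventually_chainHomotopic_sample hE)).exists
  calc ChainHomotopic E (p :: l) (c.sample m) := hcm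
    ChainHomotopic E _ ((Path.refl p).sample m) := hFm
    _ = List.replicate (m + 1) p := Path.sample_refl m
    ChainHomotopic E _ [p] := chainHomotopic_replicate_singleton (refl_mem_uniformity hE) m

/-- (Statement 15) Let `X` be a connected, simply connected (every loop is null-homotopic),
uniformly locally pathwise connected uniform space.  Then for every symmetric entourage `E`
whose balls are all open and path connected, every `E`-loop in `X` is `E`-homotopic to the
trivial one-point chain at its basepoint. -/
theorem eLoop_nullHomotopic_of_simplyConnected {X : Type u} [UniformSpace X]
    [ConnectedSpace X]
    (hsc : ∀ (x : X) (c : Path x x), c.Homotopic (Path.refl x))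
    (hulpc : ∀ D ∈ uniformity X, ∃ F ∈ uniformity X, SymmetricRel F ∧ F ⊆ D ∧
      ∀ x : X, IsOpen (ball x F) ∧ IsPathConnected (ball x F)) :
    ∀ E ∈ uniformity X, SymmetricRel E →
      (∀ x : X, IsOpen (ball x E) ∧ IsPathConnected (ball x E)) →
      ∀ (γ : List X) (p : X), IsChainList E γ → γ.head? = some p → γ.getLast? = some p →
        ChainHomotopic E γ [p] :=
  eLoop_nullHomotopic_of_simplyConnected_general hsc
end
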